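/- arXiv:math/0311281 — 7 statements merged into one kernel-verified Lean document; each statement's English description precedes it below -/
import Mathlib

section
/- Let φ : Λ → Γ be a homomorphism of (not necessarily commutative, unital) rings. Then φ is an epimorphism in the category of rings — i.e., for every ring Δ and every pair of ring homomorphisms ψ₁, ψ₂ : Γ → Δ with ψ₁ ∘ φ = ψ₂ ∘ φ one has ψ₁ = ψ₂ — if and only if the restriction-of-scalars functor from left Γ-modules to left Λ-modules along φ is full, i.e., for all left Γ-modules X and Y, every Λ-linear map from X to Y (with Λ acting through φ) is already Γ-linear. -/
/-!
If `φ` is an epimorphism and `f : X → Y` is `Λ`-linear, conjugating the action of `Γ` on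
`X × Y` by the shear `(x, y) ↦ (x, y + f x)` gives a second ring map `Γ → End (X × Y)` that
agrees with the first on the image of `φ`; hence the two agree, so the shear commutes with
every `g : Γ`, which says exactly that `f` is `Γ`-linear. Conversely, for
`ψ₁ ψ₂ : Γ → Δ` agreeing on the image of `φ`, the identity of `Δ` is `Λ`-linear from `Δ`
with `Γ` acting through `ψ₁` to `Δ` with `Γ` acting through `ψ₂`; if it is `Γ`-linear,
evaluating at `1` gives `ψ₁ = ψ₂`.
-/

def AddMonoidHom.shear {X Y : Type*} [AddCommGroup X] [AddCommGroup Y] (f : X →+ Y) :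
    (X × Y) ≃+ (X × Y) :=
  (LinearEquiv.skewProd (.refl ℤ X) (.refl ℤ Y) f.toIntLinearMap).toAddEquiv

section

variable {Γ X Y : Type*} [Ring Γ] [AddCommGroup X] [AddCommGroup Y] [Module Γ X] [Module Γ Y]

@[simp]
theorem AddMonoidHom.shear_apply (f : X →+ Y) (p : X × Y) : f.shear p = (p.1, p.2 + f p.1) :=
  rfl

theorem AddMonoidHom.shear_smul_comm_iff (f : X →+ Y) (g : Γ) :
    (∀ p : X × Y, f.shear (g • p) = g • f.shear p) ↔ ∀ x : X, f (g • x) = g • f x := by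
  simp only [shear_apply, Prod.smul_fst, Prod.smul_snd, Prod.smul_mk, Prod.ext_iff, smul_add,
    add_right_inj, true_and]
  refine ⟨fun h x => by simpa using h (x, 0), fun h p => h p.1⟩

end

theorem RingHom.map_smul_comm_of_epi {Λ Γ : Type u} [Ring Λ] [Ring Γ] (φ : Λ →+* Γ)
    (hφ : ∀ (Δ : Type u) [Ring Δ] (ψ₁ ψ₂ : Γ →+* Δ), ψ₁.comp φ = ψ₂.comp φ → ψ₁ = ψ₂)
    {M : Type u} [AddCommGroup M] [Module Γ M] (e : M ≃+ M)
    (he : ∀ (l : Λ) (x : M), e (φ l • x) = φ l • e x) (g : Γ) (x : M) :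
    e (g • x) = g • e x := by
  let ρ : Γ →+* Module.End ℤ M := Module.toModuleEnd ℤ M
  let conj := e.toIntLinearEquiv.conjRingEquiv.toRingHom
  have hconj : ∀ (a : Module.End ℤ M) (y : M), conj a y = e (a (e.symm y)) := fun _ _ => rfl
  have hρ : ρ = conj.comp ρ := hφ _ _ _ <| RingHom.ext fun l => LinearMap.ext fun y => by
    simp [ρ, hconj, he]
  have := LinearMap.congr_fun (RingHom.congr_fun hρ g) (e x)
  simpa [ρ, hconj] using this.symm

/-- A ring homomorphism `φ : Λ → Γ` is an epimorphism in the category of rings if and only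
if the restriction-of-scalars functor along `φ`, from left `Γ`-modules to left `Λ`-modules,
is full: every additive map between `Γ`-modules that is `Λ`-linear (for the `Λ`-actions
through `φ`) is already `Γ`-linear. -/
theorem stmt_0 {Λ Γ : Type u} [Ring Λ] [Ring Γ] (φ : Λ →+* Γ) :
    (∀ (Δ : Type u) [Ring Δ] (ψ₁ ψ₂ : Γ →+* Δ), ψ₁.comp φ = ψ₂.comp φ → ψ₁ = ψ₂) ↔
      (∀ (X Y : Type u) [AddCommGroup X] [AddCommGroup Y] [Module Γ X] [Module Γ Y]
        (f : X →+ Y), (∀ (l : Λ) (x : X), f (φ l • x) = φ l • f x) →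
        ∀ (g : Γ) (x : X), f (g • x) = g • f x) := by
  constructor
  · intro hφ X Y _ _ _ _ f hf g
    exact (f.shear_smul_comm_iff g).1 <| φ.map_smul_comm_of_epi hφ f.shear
      (fun l => (f.shear_smul_comm_iff (φ l)).2 (hf l)) g
  · intro hfull Δ _ ψ₁ ψ₂ h
    have hid := @hfull Δ Δ _ _ (.compHom Δ ψ₁) (.compHom Δ ψ₂) (.id Δ) fun l x =>
      congrArg (· * x) (RingHom.congr_fun h l)
    exact RingHom.ext fun g => by simpa using show ψ₁ g * 1 = ψ₂ g * 1 from hid g 1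
end

section
/- Let φ₁, φ₂ : Λ → Γ be ring homomorphisms. If the two restriction-of-scalars functors along φ₁ and φ₂, from the category of left Γ-modules to the category of left Λ-modules, are naturally isomorphic, then there exists an inner automorphism relating φ₁ and φ₂: there is a unit a ∈ Γ (an invertible element) such that a·φ₁(λ) = φ₂(λ)·a for all λ ∈ Λ. -/
universe u

open CategoryTheory

/-!
Let `τ` be a natural transformation between the restrictions of scalars along `φ₁` and `φ₂`,
and look at its component at the regular module `Γ`. Naturality with respect to the
right multiplications `x ↦ x * g`, which are the `Γ`-linear endomorphisms of `Γ`, forces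
this component to be left multiplication by `a := τ(1)`, and `Λ`-linearity then reads
`a * φ₁ l = φ₂ l * a`. Since `(σ ≫ τ)(1) = τ(1) * σ(1)`, for a natural isomorphism the
element attached to the inverse is an inverse of `a`.
-/

namespace ModuleCat

variable {Λ Γ : Type u} [Ring Λ] [Ring Γ] {φ₁ φ₂ φ₃ : Λ →+* Γ}

noncomputable def restrictScalarsNatTransSelf
    (τ : restrictScalars.{u} φ₁ ⟶ restrictScalars.{u} φ₂) : Γ → Γ :=
  fun x => τ.app (of Γ Γ) x

lemma restrictScalarsNatTransSelf_mul
    (τ : restrictScalars.{u} φ₁ ⟶ restrictScalars.{u} φ₂) (x g : Γ) :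
    restrictScalarsNatTransSelf τ (x * g) = restrictScalarsNatTransSelf τ x * g :=
  ConcreteCategory.congr_hom (τ.naturality (ofHom (LinearMap.toSpanSingleton Γ Γ g))) x

lemma restrictScalarsNatTransSelf_eq_mul
    (τ : restrictScalars.{u} φ₁ ⟶ restrictScalars.{u} φ₂) (x : Γ) :
    restrictScalarsNatTransSelf τ x = restrictScalarsNatTransSelf τ 1 * x := by
  rw [← restrictScalarsNatTransSelf_mul, one_mul]

lemma restrictScalarsNatTransSelf_one_mul_comm
    (τ : restrictScalars.{u} φ₁ ⟶ restrictScalars.{u} φ₂) (l : Λ) :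
    restrictScalarsNatTransSelf τ 1 * φ₁ l = φ₂ l * restrictScalarsNatTransSelf τ 1 :=
  calc restrictScalarsNatTransSelf τ 1 * φ₁ l
        = restrictScalarsNatTransSelf τ (φ₁ l * 1) := by
          rw [← restrictScalarsNatTransSelf_eq_mul, mul_one]
    _ = φ₂ l * restrictScalarsNatTransSelf τ 1 := (τ.app (of Γ Γ)).hom.map_smul l (1 : Γ)

lemma restrictScalarsNatTransSelf_comp_one
    (σ : restrictScalars.{u} φ₁ ⟶ restrictScalars.{u} φ₂)
    (τ : restrictScalars.{u} φ₂ ⟶ restrictScalars.{u} φ₃) :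
    restrictScalarsNatTransSelf (σ ≫ τ) 1 =
      restrictScalarsNatTransSelf τ 1 * restrictScalarsNatTransSelf σ 1 :=
  restrictScalarsNatTransSelf_eq_mul τ _

lemma restrictScalarsNatTransSelf_id_one :
    restrictScalarsNatTransSelf (𝟙 (restrictScalars.{u} φ₁)) (1 : Γ) = 1 :=
  rfl

noncomputable def unitOfRestrictScalarsIso
    (e : restrictScalars.{u} φ₁ ≅ restrictScalars.{u} φ₂) : Γˣ where
  val := restrictScalarsNatTransSelf e.hom 1
  inv := restrictScalarsNatTransSelf e.inv 1
  val_inv := by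
    rw [← restrictScalarsNatTransSelf_comp_one, e.inv_hom_id, restrictScalarsNatTransSelf_id_one]
  inv_val := by
    rw [← restrictScalarsNatTransSelf_comp_one, e.hom_inv_id, restrictScalarsNatTransSelf_id_one]

end ModuleCat

/-- Let `φ₁, φ₂ : Λ → Γ` be ring homomorphisms.  If the restriction-of-scalars functors
along `φ₁` and `φ₂`, from left `Γ`-modules to left `Λ`-modules, are naturally isomorphic,
then there is a unit `a` of `Γ` with `a · φ₁(l) = φ₂(l) · a` for all `l`. -/
theorem stmt_3 {Λ Γ : Type u} [Ring Λ] [Ring Γ] (φ₁ φ₂ : Λ →+* Γ)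
    (h : Nonempty
      ((ModuleCat.restrictScalars.{u} φ₁ : ModuleCat.{u} Γ ⥤ ModuleCat.{u} Λ) ≅
        ModuleCat.restrictScalars.{u} φ₂)) :
    ∃ a : Γˣ, ∀ l : Λ, (a : Γ) * φ₁ l = φ₂ l * (a : Γ) := by
  obtain ⟨e⟩ := h
  exact ⟨ModuleCat.unitOfRestrictScalarsIso e,
    ModuleCat.restrictScalarsNatTransSelf_one_mul_comm e.hom⟩
end

section
/- Let Γ be a ring and let X : 0 → X_n →^{d_n} X_{n-1} → ⋯ → X_1 →^{d_1} X_0 →^{d_0} X_{-1} → 0 be a complex of left Γ-modules (consecutive composites zero) such that X_i is projective for all 0 ≤ i ≤ n. Denote the homology of this complex by H_i := ker d_i / im d_{i+1} for 0 ≤ i ≤ n−1, H_n := ker d_n, and H_{-1} := coker d_0 = X_{-1}/im d_0. Then pd X_{-1} ≤ max { i + 1 + pd H_i : −1 ≤ i ≤ n } (an inequality in ℕ∞). -/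
open CategoryTheory

universe u

/-- `hasProjDimLE R n M` means that the left `R`-module `M` admits a projective resolution
`0 → P_n → ⋯ → P_0 → M → 0` of length `n`. -/
def hasProjDimLE (R : Type u) [Ring R] : ℕ → ModuleCat.{u} R → Prop
  | 0, M => Module.Projective R M
  | n + 1, M =>
      ∃ (P K : ModuleCat.{u} R) (f : ↥P →ₗ[R] ↥M) (g : ↥K →ₗ[R] ↥P),
        Module.Projective R ↥P ∧ Function.Surjective f ∧ Function.Injective g ∧
        (∀ p : ↥P, f p = 0 ↔ p ∈ Set.range g) ∧ hasProjDimLE R n K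

/-- The projective dimension of a module, as an element of `ℕ∞`. -/
noncomputable def projDim (R : Type u) [Ring R] (M : Type u) [AddCommGroup M] [Module R M] :
    ℕ∞ :=
  sInf ((fun n : ℕ => (n : ℕ∞)) '' {n : ℕ | hasProjDimLE R n (ModuleCat.of R M)})

/-- Unbundled version of `hasProjDimLE`. -/
def pdle (R : Type u) [Ring R] (n : ℕ) (M : Type u) [AddCommGroup M] [Module R M] : Prop :=
  hasProjDimLE R n (ModuleCat.of R M)

section lemmas

variable {R : Type u} [Ring R]

theorem pdle_zero_iff {M : Type u} [AddCommGroup M] [Module R M] :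
    pdle R 0 M ↔ Module.Projective R M := Iff.rfl

theorem pdle_succ_def {M : Type u} [AddCommGroup M] [Module R M] (n : ℕ) :
    pdle R (n + 1) M ↔ ∃ (P K : ModuleCat.{u} R) (f : ↥P →ₗ[R] M) (g : ↥K →ₗ[R] ↥P),
      Module.Projective R ↥P ∧ Function.Surjective f ∧ Function.Injective g ∧
      (∀ p : ↥P, f p = 0 ↔ p ∈ Set.range g) ∧ hasProjDimLE R n K := Iff.rfl

theorem pdle_of_equiv {M N : Type u} [AddCommGroup M] [Module R M] [AddCommGroup N] [Module R N]
    (n : ℕ) (e : M ≃ₗ[R] N) (h : pdle R n M) : pdle R n N := by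
  cases n with
  | zero =>
    haveI : Module.Projective R M := h
    exact Module.Projective.of_equiv e
  | succ n =>
    obtain ⟨P, K, f, g, hP, hf, hg, hker, hK⟩ := (pdle_succ_def n).1 h
    refine (pdle_succ_def n).2 ⟨P, K, e.toLinearMap ∘ₗ f, g, hP, ?_, hg, ?_, hK⟩
    · exact e.surjective.comp hf
    · intro p
      rw [LinearMap.comp_apply, LinearEquiv.coe_coe, EmbeddingLike.map_eq_zero_iff]
      exact hker p

theorem pdle_of_surj {P M : Type u} [AddCommGroup P] [Module R P] [AddCommGroup M] [Module R M]
    (hP : Module.Projective R P) (f : P →ₗ[R] M) (hf : Function.Surjective f) {n : ℕ}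
    (hK : pdle R n ↥(LinearMap.ker f)) : pdle R (n + 1) M := by
  refine (pdle_succ_def n).2 ⟨ModuleCat.of R P, ModuleCat.of R ↥(LinearMap.ker f), f,
    (LinearMap.ker f).subtype, hP, hf, Subtype.coe_injective, fun p => ?_, hK⟩
  constructor
  · intro h; exact ⟨⟨p, h⟩, rfl⟩
  · rintro ⟨⟨q, hq⟩, rfl⟩; exact hq

theorem pdle_succ_elim {M : Type u} [AddCommGroup M] [Module R M] {n : ℕ}
    (h : pdle R (n + 1) M) :
    ∃ (P : Type u) (_ : AddCommGroup P) (_ : Module R P) (f : P →ₗ[R] M),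
      Module.Projective R P ∧ Function.Surjective f ∧ pdle R n ↥(LinearMap.ker f) := by
  obtain ⟨P, K, f, g, hP, hf, hg, hker, hK⟩ := (pdle_succ_def n).1 h
  refine ⟨↥P, inferInstance, inferInstance, f, hP, hf, ?_⟩
  have hmem : ∀ k : ↥K, g k ∈ LinearMap.ker f := fun k =>
    LinearMap.mem_ker.2 ((hker (g k)).2 ⟨k, rfl⟩)
  have e : ↥K ≃ₗ[R] ↥(LinearMap.ker f) := by
    refine LinearEquiv.ofBijective (g.codRestrict (LinearMap.ker f) hmem) ⟨?_, ?_⟩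
    · intro a b hab
      exact hg (congrArg Subtype.val hab)
    · rintro ⟨p, hp⟩
      obtain ⟨k, hk⟩ := (hker p).1 hp
      exact ⟨k, Subtype.ext hk⟩
  exact pdle_of_equiv n e hK

theorem pdle_succ_self :
    ∀ (n : ℕ) (M : Type u) [AddCommGroup M] [Module R M], pdle R n M → pdle R (n + 1) M := by
  intro n
  induction n with
  | zero =>
    intro M _ _ h
    haveI hM : Module.Projective R M := h
    refine pdle_of_surj hM LinearMap.id Function.surjective_id ?_
    haveI : Subsingleton ↥(LinearMap.ker (LinearMap.id : M →ₗ[R] M)) := by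
      rw [LinearMap.ker_id]; infer_instance
    haveI : Module.Free R ↥(LinearMap.ker (LinearMap.id : M →ₗ[R] M)) :=
      Module.Free.of_subsingleton R _
    exact (Module.Projective.of_free (R := R)
      (P := ↥(LinearMap.ker (LinearMap.id : M →ₗ[R] M))) : _)
  | succ n ih =>
    intro M _ _ h
    obtain ⟨P, _, _, f, hP, hf, hK⟩ := pdle_succ_elim h
    exact pdle_of_surj hP f hf (ih _ hK)

theorem pdle_mono {M : Type u} [AddCommGroup M] [Module R M] {m n : ℕ} (hmn : m ≤ n)
    (h : pdle R m M) : pdle R n M := by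
  induction hmn with
  | refl => exact h
  | step _ ih => exact pdle_succ_self _ _ ih

/-- Horseshoe-type lemma: in a short exact sequence `0 → A → B → C → 0`, if `A` and `C` have
projective dimension at most `m`, then so does `B`. -/
theorem pdle_extension : ∀ (m : ℕ) (A B C : Type u) (_ : AddCommGroup A) (_ : Module R A)
    (_ : AddCommGroup B) (_ : Module R B) (_ : AddCommGroup C) (_ : Module R C)
    (i : A →ₗ[R] B) (π : B →ₗ[R] C), Function.Injective i → Function.Surjective π →
    LinearMap.ker π = LinearMap.range i → pdle R m A → pdle R m C → pdle R m B := by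
  intro m
  induction m with
  | zero =>
    intro A B C _ _ _ _ _ _ i π hi hπ hker hA hC
    haveI : Module.Projective R A := hA
    haveI : Module.Projective R C := hC
    obtain ⟨s, hs⟩ := Module.projective_lifting_property π LinearMap.id hπ
    have hsc : ∀ c : C, π (s c) = c := fun c => congrFun (congrArg DFunLike.coe hs) c
    have e : (A × C) ≃ₗ[R] B := by
      refine LinearEquiv.ofBijective (i.coprod s) ⟨?_, ?_⟩
      · rintro ⟨a₁, c₁⟩ ⟨a₂, c₂⟩ hac
        simp only [LinearMap.coprod_apply] at hac
        have h1 : π (i a₁) = 0 ∧ π (i a₂) = 0 := by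
          constructor <;> · rw [← LinearMap.mem_ker, hker]; exact ⟨_, rfl⟩
        have hc : c₁ = c₂ := by
          have := congrArg π hac
          simpa [h1.1, h1.2, hsc] using this
        subst hc
        have : i a₁ = i a₂ := by
          have := add_right_cancel hac
          exact this
        rw [hi this]
      · intro b
        have hb : b - s (π b) ∈ LinearMap.ker π := by
          simp [LinearMap.mem_ker, hsc]
        rw [hker] at hb
        obtain ⟨a, ha⟩ := hb
        exact ⟨(a, π b), by simp [LinearMap.coprod_apply, ha]⟩
    exact pdle_of_equiv 0 e (inferInstance : Module.Projective R (A × C))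
  | succ m ih =>
    intro A B C _ _ _ _ _ _ i π hi hπ hker hA hC
    obtain ⟨PA, _, _, fA, hPA, hfA, hKA⟩ := pdle_succ_elim hA
    obtain ⟨PC, _, _, fC, hPC, hfC, hKC⟩ := pdle_succ_elim hC
    haveI := hPA; haveI := hPC
    obtain ⟨t, ht⟩ := Module.projective_lifting_property π fC hπ
    have htc : ∀ q : PC, π (t q) = fC q := fun q => congrFun (congrArg DFunLike.coe ht) q
    set F : PA × PC →ₗ[R] B := (i ∘ₗ fA).coprod t with hF
    have hFapp : ∀ p q, F (p, q) = i (fA p) + t q := fun p q => rfl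
    have hFsurj : Function.Surjective F := by
      intro b
      obtain ⟨q, hq⟩ := hfC (π b)
      have hbq : b - t q ∈ LinearMap.ker π := by
        simp [LinearMap.mem_ker, htc, hq]
      rw [hker] at hbq
      obtain ⟨a, ha⟩ := hbq
      obtain ⟨p, hp⟩ := hfA a
      exact ⟨(p, q), by rw [hFapp, hp, ha]; abel⟩
    refine pdle_of_surj (inferInstance : Module.Projective R (PA × PC)) F hFsurj ?_
    -- build the short exact sequence of kernels
    have hmem1 : ∀ x : ↥(LinearMap.ker fA), ((x : PA), (0 : PC)) ∈ LinearMap.ker F := by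
      intro x
      have : fA (x : PA) = 0 := x.2
      simp [LinearMap.mem_ker, hFapp, this]
    set i' : ↥(LinearMap.ker fA) →ₗ[R] ↥(LinearMap.ker F) :=
      ((LinearMap.inl R PA PC).comp (LinearMap.ker fA).subtype).codRestrict
        (LinearMap.ker F) hmem1 with hi'
    have hmem2 : ∀ x : ↥(LinearMap.ker F), (x : PA × PC).2 ∈ LinearMap.ker fC := by
      rintro ⟨⟨p, q⟩, hx⟩
      have hx' : i (fA p) + t q = 0 := hx
      have : π (i (fA p)) = 0 := by
        rw [← LinearMap.mem_ker, hker]; exact ⟨_, rfl⟩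
      have := congrArg π hx'
      simp only [map_add, map_zero] at this
      rw [‹π (i (fA p)) = 0›, zero_add, htc] at this
      exact LinearMap.mem_ker.2 this
    set π' : ↥(LinearMap.ker F) →ₗ[R] ↥(LinearMap.ker fC) :=
      ((LinearMap.snd R PA PC).comp (LinearMap.ker F).subtype).codRestrict
        (LinearMap.ker fC) hmem2 with hπ'
    have hi'inj : Function.Injective i' := by
      intro x y hxy
      have h1 : ((x : PA), (0 : PC)) = ((y : PA), (0 : PC)) := congrArg Subtype.val hxy
      exact Subtype.ext (congrArg Prod.fst h1)
    have hπ'surj : Function.Surjective π' := by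
      rintro ⟨q, hq⟩
      have hq' : fC q = 0 := hq
      have htq : t q ∈ LinearMap.ker π := by simp [LinearMap.mem_ker, htc, hq']
      rw [hker] at htq
      obtain ⟨a, ha⟩ := htq
      obtain ⟨p, hp⟩ := hfA (-a)
      have hFpq : (p, q) ∈ LinearMap.ker F := by
        rw [LinearMap.mem_ker, hFapp, hp, map_neg, ha]
        abel
      exact ⟨⟨(p, q), hFpq⟩, rfl⟩
    have hker' : LinearMap.ker π' = LinearMap.range i' := by
      ext x
      obtain ⟨⟨p, q⟩, hx⟩ := x
      constructor
      · intro hx0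
        have hq0 : q = 0 := congrArg Subtype.val hx0
        subst hq0
        have hx' : i (fA p) + t 0 = 0 := hx
        rw [map_zero, add_zero] at hx'
        have hfa : fA p = 0 := hi (by rw [hx', map_zero])
        exact ⟨⟨p, LinearMap.mem_ker.2 hfa⟩, rfl⟩
      · rintro ⟨⟨a, ha⟩, hax⟩
        have hq : (0 : PC) = q :=
          congrArg (fun z : ↥(LinearMap.ker F) => (Subtype.val z).2) hax
        exact LinearMap.mem_ker.2 (Subtype.ext hq.symm)
    exact ih _ _ _ _ _ _ _ _ _ i' π' hi'inj hπ'surj hker' hKA hKC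

/-- In a short exact sequence `0 → A → B → C → 0` with `B` projective,
`pd C ≤ pd A + 1`. -/
theorem pdle_shift {A B C : Type u} [AddCommGroup A] [Module R A] [AddCommGroup B] [Module R B]
    [AddCommGroup C] [Module R C] (hB : Module.Projective R B) (i : A →ₗ[R] B) (π : B →ₗ[R] C)
    (hi : Function.Injective i) (hπ : Function.Surjective π)
    (hker : LinearMap.ker π = LinearMap.range i) {m : ℕ} (hA : pdle R m A) :
    pdle R (m + 1) C := by
  refine pdle_of_surj hB π hπ ?_
  have e : A ≃ₗ[R] ↥(LinearMap.ker π) :=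
    (LinearEquiv.ofInjective i hi).trans (LinearEquiv.ofEq _ _ hker.symm)
  exact pdle_of_equiv m e hA

theorem projDim_le_of_pdle {M : Type u} [AddCommGroup M] [Module R M] {k : ℕ}
    (h : pdle R k M) : projDim R M ≤ (k : ℕ∞) :=
  sInf_le ⟨k, h, rfl⟩

theorem exists_pdle_of_ne_top {M : Type u} [AddCommGroup M] [Module R M]
    (h : projDim R M ≠ ⊤) : ∃ k : ℕ, pdle R k M ∧ (k : ℕ∞) = projDim R M := by
  have hproj : projDim R M
      = sInf ((fun n : ℕ => (n : ℕ∞)) '' {n : ℕ | hasProjDimLE R n (ModuleCat.of R M)}) := rfl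
  have hSne : {n : ℕ | hasProjDimLE R n (ModuleCat.of R M)}.Nonempty := by
    by_contra hc
    rw [Set.not_nonempty_iff_eq_empty] at hc
    exact h (by rw [hproj, hc, Set.image_empty, sInf_empty])
  refine ⟨sInf {n : ℕ | hasProjDimLE R n (ModuleCat.of R M)}, Nat.sInf_mem hSne,
    le_antisymm ?_ ?_⟩
  · rw [hproj]
    refine le_sInf ?_
    rintro x ⟨m, hm, rfl⟩
    show ((sInf _ : ℕ) : ℕ∞) ≤ (m : ℕ∞)
    exact_mod_cast Nat.sInf_le hm
  · rw [hproj]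
    exact sInf_le ⟨_, Nat.sInf_mem hSne, rfl⟩

theorem enat_cast_max (x y : ℕ) : ((max x y : ℕ) : ℕ∞) = max (x : ℕ∞) (y : ℕ∞) := by
  rcases le_total x y with h | h
  · rw [max_eq_right h, max_eq_right (by exact_mod_cast h)]
  · rw [max_eq_left h, max_eq_left (by exact_mod_cast h)]

end lemmas

/-- Let `0 → X_n → ⋯ → X_0 → X_{-1} → 0` be a complex (with `X_i = M (i+1)` for `0 ≤ i ≤ n`,
`X_{-1} = M 0`, and differentials `d i : X_i → X_{i-1}`) in which all `X_i` (`0 ≤ i ≤ n`) are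
projective.  Then `pd X_{-1} ≤ max { i + 1 + pd H_i : -1 ≤ i ≤ n }`, where `H_{-1}` is the
cokernel of `d 0`, `H_n` is the kernel of `d n`, and `H_i = ker (d i) / im (d (i+1))` for
`0 ≤ i ≤ n - 1`. -/
theorem stmt_5 {R : Type u} [Ring R] (n : ℕ) (M : ℕ → ModuleCat.{u} R)
    (d : ∀ i : ℕ, ↥(M (i + 1)) →ₗ[R] ↥(M i))
    (hcomplex : ∀ i < n, ∀ y : ↥(M (i + 2)), d i (d (i + 1) y) = 0)
    (hproj : ∀ i ≤ n, Module.Projective R ↥(M (i + 1))) :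
    projDim R ↥(M 0) ≤
      max (projDim R (↥(M 0) ⧸ LinearMap.range (d 0)))
        (max (((n : ℕ∞) + 1) + projDim R ↥(LinearMap.ker (d n)))
          ((Finset.range n).sup fun i =>
            ((i : ℕ∞) + 1) +
              projDim R
                (↥(LinearMap.ker (d i)) ⧸
                  (LinearMap.range (d (i + 1))).comap (LinearMap.ker (d i)).subtype))) := by
  set SUP := (Finset.range n).sup (fun i => ((i : ℕ∞) + 1) +
      projDim R (↥(LinearMap.ker (d i)) ⧸
        (LinearMap.range (d (i + 1))).comap (LinearMap.ker (d i)).subtype)) with hSUP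
  by_cases ha : projDim R (↥(M 0) ⧸ LinearMap.range (d 0)) = ⊤
  · exact le_trans (le_trans le_top ha.ge) (le_max_left _ _)
  by_cases hb : projDim R ↥(LinearMap.ker (d n)) = ⊤
  · refine le_trans (le_trans le_top ?_) (le_trans (le_max_left _ _) (le_max_right _ _))
    simp [hb]
  by_cases hcall : ∀ i, i < n → projDim R (↥(LinearMap.ker (d i)) ⧸
      (LinearMap.range (d (i + 1))).comap (LinearMap.ker (d i)).subtype) ≠ ⊤
  case neg =>
    push_neg at hcall
    obtain ⟨i, hi, hitop⟩ := hcall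
    refine le_trans (le_trans le_top ?_) (le_trans (le_max_right _ _) (le_max_right _ _))
    refine le_trans ?_ (Finset.le_sup (Finset.mem_range.2 hi))
    simp [hitop]
  obtain ⟨a, hpa, haeq⟩ := exists_pdle_of_ne_top ha
  obtain ⟨b, hpb, hbeq⟩ := exists_pdle_of_ne_top hb
  have hcex : ∀ i, ∃ k : ℕ, i < n →
      pdle R k (↥(LinearMap.ker (d i)) ⧸
        (LinearMap.range (d (i + 1))).comap (LinearMap.ker (d i)).subtype) ∧
      (k : ℕ∞) = projDim R (↥(LinearMap.ker (d i)) ⧸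
        (LinearMap.range (d (i + 1))).comap (LinearMap.ker (d i)).subtype) := by
    intro i
    by_cases h : i < n
    · obtain ⟨k, h1, h2⟩ := exists_pdle_of_ne_top (hcall i h)
      exact ⟨k, fun _ => ⟨h1, h2⟩⟩
    · exact ⟨0, fun h' => absurd h' h⟩
  choose c hcprop using hcex
  let u : ℕ → ℕ := fun k => Nat.rec b (fun k' uk => max (c (n - (k' + 1))) (uk + 1)) k
  have claim1 : ∀ k, k ≤ n → pdle R (u k) ↥(LinearMap.ker (d (n - k))) := by
    intro k
    induction k with
    | zero =>
      intro _
      rw [Nat.sub_zero]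
      exact hpb
    | succ k ih =>
      intro hk
      have ihk := ih (by omega)
      set j := n - (k + 1) with hj
      have hjn : j < n := by omega
      have hj1 : j + 1 = n - k := by omega
      have hker1 : pdle R (u k) ↥(LinearMap.ker (d (j + 1))) := by
        rw [hj1]; exact ihk
      have hsub : ∀ x : ↥(M (j + 2)), d (j + 1) x ∈ LinearMap.ker (d j) :=
        fun x => LinearMap.mem_ker.2 (hcomplex j hjn x)
      set ψ : ↥(M (j + 2)) →ₗ[R] ↥(LinearMap.ker (d j)) :=
        (d (j + 1)).codRestrict (LinearMap.ker (d j)) hsub with hψ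
      set B' := (LinearMap.range (d (j + 1))).comap (LinearMap.ker (d j)).subtype with hB'
      have hsub2 : ∀ x : ↥(M (j + 2)), ψ x ∈ B' := fun x => ⟨x, rfl⟩
      set φ : ↥(M (j + 2)) →ₗ[R] ↥B' := ψ.codRestrict B' hsub2 with hφ
      have hφsurj : Function.Surjective φ := by
        rintro ⟨⟨z, hz⟩, hz'⟩
        rw [Submodule.mem_comap] at hz'
        obtain ⟨x, hx⟩ := hz'
        refine ⟨x, ?_⟩
        apply Subtype.ext; apply Subtype.ext
        exact hx
      have hφker : LinearMap.ker φ = LinearMap.ker (d (j + 1)) := by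
        ext x
        simp only [LinearMap.mem_ker]
        constructor
        · intro h
          exact congrArg (fun z : ↥B' => ((z : ↥(LinearMap.ker (d j))) : ↥(M (j + 1)))) h
        · intro h
          apply Subtype.ext; apply Subtype.ext; exact h
      have hkerφ : pdle R (u k) ↥(LinearMap.ker φ) :=
        pdle_of_equiv _ (LinearEquiv.ofEq _ _ hφker.symm) hker1
      have hB'p : pdle R (u k + 1) ↥B' :=
        pdle_of_surj (hproj (j + 1) (by omega)) φ hφsurj hkerφ
      obtain ⟨hc1, hc2⟩ := hcprop j hjn
      have hext := pdle_extension (max (c j) (u k + 1)) ↥B' ↥(LinearMap.ker (d j))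
        (↥(LinearMap.ker (d j)) ⧸ B') _ _ _ _ _ _
        B'.subtype B'.mkQ (Submodule.injective_subtype B') (Submodule.mkQ_surjective B')
        (by rw [Submodule.ker_mkQ, Submodule.range_subtype])
        (pdle_mono (le_max_right _ _) hB'p) (pdle_mono (le_max_left _ _) hc1)
      have hu : u (k + 1) = max (c j) (u k + 1) := rfl
      rw [hu]
      exact hext
  have claim2 : ∀ k, k ≤ n → ((u k + (n - k) + 1 : ℕ) : ℕ∞) ≤
      max (((n : ℕ∞) + 1) + projDim R ↥(LinearMap.ker (d n))) SUP := by
    intro k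
    induction k with
    | zero =>
      intro _
      refine le_trans ?_ (le_max_left _ _)
      rw [show u 0 = b from rfl, Nat.sub_zero, ← hbeq]
      push_cast
      exact le_of_eq (by ring)
    | succ k ih =>
      intro hk
      have ihk := ih (by omega)
      have hu : u (k + 1) = max (c (n - (k + 1))) (u k + 1) := rfl
      rw [hu, show max (c (n - (k + 1))) (u k + 1) + (n - (k + 1)) + 1 =
        max (c (n - (k + 1)) + (n - (k + 1)) + 1) (u k + 1 + (n - (k + 1)) + 1) from by omega,
        enat_cast_max]
      refine max_le ?_ ?_
      · refine le_trans ?_ (le_max_right _ _)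
        rw [hSUP]
        refine le_trans ?_ (Finset.le_sup (Finset.mem_range.2 (show n - (k + 1) < n by omega)))
        obtain ⟨_, hc2⟩ := hcprop (n - (k + 1)) (by omega)
        rw [← hc2]
        push_cast
        exact le_of_eq (by ring)
      · rw [show u k + 1 + (n - (k + 1)) + 1 = u k + (n - k) + 1 from by omega]
        exact ihk
  have hZ0 : pdle R (u n) ↥(LinearMap.ker (d 0)) := by
    have h := claim1 n le_rfl
    rwa [Nat.sub_self] at h
  have hR0 : pdle R (u n + 1) ↥(LinearMap.range (d 0)) := by
    refine pdle_shift (hproj 0 (Nat.zero_le n)) (LinearMap.ker (d 0)).subtype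
      (d 0).rangeRestrict (Submodule.injective_subtype _)
      (LinearMap.surjective_rangeRestrict (d 0)) ?_ hZ0
    rw [LinearMap.ker_rangeRestrict, Submodule.range_subtype]
  have hM0 : pdle R (max a (u n + 1)) ↥(M 0) :=
    pdle_extension (max a (u n + 1)) ↥(LinearMap.range (d 0)) ↥(M 0)
      (↥(M 0) ⧸ LinearMap.range (d 0)) _ _ _ _ _ _ (LinearMap.range (d 0)).subtype
      (LinearMap.range (d 0)).mkQ (Submodule.injective_subtype _)
      (Submodule.mkQ_surjective _)
      (by rw [Submodule.ker_mkQ, Submodule.range_subtype])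
      (pdle_mono (le_max_right _ _) hR0) (pdle_mono (le_max_left _ _) hpa)
  refine le_trans (projDim_le_of_pdle hM0) ?_
  rw [enat_cast_max]
  refine max_le (le_trans ?_ (le_max_left _ _)) (le_trans ?_ (le_max_right _ _))
  · exact le_of_eq haeq
  · have h := claim2 n le_rfl
    rw [Nat.sub_self, Nat.add_zero] at h
    exact h
end

section
/- Let Λ be an Artin algebra and let C be a class of finitely generated left Λ-modules closed under isomorphisms and finite direct sums. Then C is closed under submodules and under factor modules (i.e., for every finitely generated module Y in C, all submodules and all quotient modules of Y are in C) if and only if there exists a two-sided ideal I of Λ such that C equals the class of all finitely generated left Λ-modules X with I·X = 0. -/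
/-!
Given the closure properties, let `I` be the annihilator of the class `C`. As `Λ` is left
Artinian, `I` is already the intersection of the annihilators of finitely many elements of
modules in `C`, so `Λ ⧸ I` embeds into a finite direct sum of modules in `C` and therefore lies
in `C`. Every finitely generated module killed by `I` is a quotient of some `(Λ ⧸ I)ⁿ`, hence in
`C`. Conversely, the class of finitely generated modules killed by a two-sided ideal is closed
under quotients, and under submodules because `Λ` is also Noetherian (Hopkins–Levitzki).
-/

universe u

theorem IsArtinian.exists_fin_iInf_eq {R M ι : Type*} [Ring R] [AddCommGroup M] [Module R M]
    [IsArtinian R M] (F : ι → Submodule R M) :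
    ∃ (k : ℕ) (g : Fin k → ι), ⨅ j, F (g j) = ⨅ i, F i := by
  obtain ⟨_, ⟨k, g, rfl⟩, hmin⟩ := IsArtinian.set_has_minimal
    {N | ∃ (k : ℕ) (g : Fin k → ι), N = ⨅ j, F (g j)} ⟨_, 0, Fin.elim0, rfl⟩
  refine ⟨k, g, le_antisymm (le_iInf fun i => ?_) (iInf_mono' fun j => ⟨g j, le_rfl⟩)⟩
  -- adjoining `F i` to a minimal finite intersection does not make it smaller
  let g' : Fin (k + 1) → ι := Fin.cons i g
  have hle : ⨅ j, F (g' j) ≤ ⨅ j, F (g j) :=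
    le_iInf fun j => by simpa [g'] using iInf_le (fun j => F (g' j)) j.succ
  rw [← eq_of_le_of_not_lt hle (hmin _ ⟨k + 1, g', rfl⟩)]
  simpa [g'] using iInf_le (fun j => F (g' j)) 0

section ClassAnnihilator

variable {Λ : Type u} [Ring Λ]

def annihilatorOfClass (C : Set (ModuleCat.{u} Λ)) : Ideal Λ :=
  ⨅ X : C, Module.annihilator Λ X

instance (C : Set (ModuleCat.{u} Λ)) : (annihilatorOfClass C).IsTwoSided := by
  unfold annihilatorOfClass
  infer_instance

theorem mem_annihilatorOfClass {C : Set (ModuleCat.{u} Λ)} {a : Λ} :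
    a ∈ annihilatorOfClass C ↔ ∀ X ∈ C, ∀ x : X, a • x = 0 := by
  simp [annihilatorOfClass, Module.mem_annihilator]

theorem exists_ker_toSpanSingleton_eq_annihilatorOfClass [IsArtinianRing Λ]
    (C : Set (ModuleCat.{u} Λ))
    (hsum : ∀ (k : ℕ) (f : Fin k → ModuleCat.{u} Λ), (∀ i, f i ∈ C) →
      ModuleCat.of Λ (∀ i, ↥(f i)) ∈ C) :
    ∃ M ∈ C, ∃ m : M, LinearMap.ker (LinearMap.toSpanSingleton Λ M m) = annihilatorOfClass C := by
  obtain ⟨k, g, hg⟩ := IsArtinian.exists_fin_iInf_eq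
    fun p : Σ X : C, (X : ModuleCat.{u} Λ) => LinearMap.ker (LinearMap.toSpanSingleton Λ _ p.2)
  refine ⟨_, hsum k (fun j => (g j).1.1) (fun j => (g j).1.2), fun j => (g j).2, ?_⟩
  ext a
  have hga := SetLike.ext_iff.mp hg a
  simp only [Submodule.mem_iInf, LinearMap.mem_ker, LinearMap.toSpanSingleton_apply] at hga
  simp only [LinearMap.mem_ker, LinearMap.toSpanSingleton_apply, funext_iff, Pi.smul_apply,
    Pi.zero_apply, hga, Sigma.forall, Subtype.forall, mem_annihilatorOfClass]

theorem quotient_annihilatorOfClass_mem [IsArtinianRing Λ] (C : Set (ModuleCat.{u} Λ))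
    (hsub : ∀ X ∈ C, ∀ p : Submodule Λ ↥X, ModuleCat.of Λ ↥p ∈ C)
    (hquot : ∀ X ∈ C, ∀ (Z : ModuleCat.{u} Λ) (g : ↥X →ₗ[Λ] ↥Z), Function.Surjective g → Z ∈ C)
    (hsum : ∀ (k : ℕ) (f : Fin k → ModuleCat.{u} Λ), (∀ i, f i ∈ C) →
      ModuleCat.of Λ (∀ i, ↥(f i)) ∈ C) :
    ModuleCat.of Λ (Λ ⧸ annihilatorOfClass C) ∈ C := by
  obtain ⟨M, hM, m, hm⟩ := exists_ker_toSpanSingleton_eq_annihilatorOfClass C hsum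
  let f := LinearMap.toSpanSingleton Λ M m
  let e : (Λ ⧸ annihilatorOfClass C) ≃ₗ[Λ] LinearMap.range f :=
    (Submodule.quotEquivOfEq _ _ hm.symm).trans f.quotKerEquivRange
  exact hquot _ (hsub M hM _) _ e.symm.toLinearMap e.symm.surjective

end ClassAnnihilator

theorem Module.Finite.exists_surjective_pi_quotient {Λ X : Type*} [Ring Λ] [AddCommGroup X]
    [Module Λ X] [Module.Finite Λ X] (J : Submodule Λ Λ) (hJ : ∀ a ∈ J, ∀ x : X, a • x = 0) :
    ∃ (n : ℕ) (g : (Fin n → Λ ⧸ J) →ₗ[Λ] X), Function.Surjective g := by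
  obtain ⟨n, y, hy⟩ := Module.Finite.exists_fin (R := Λ) (M := X)
  refine ⟨n, ∑ i, J.liftQ (LinearMap.toSpanSingleton Λ X (y i)) (fun a ha => hJ a ha (y i)) ∘ₗ
    LinearMap.proj i, fun x => ?_⟩
  obtain ⟨c, rfl⟩ := (Submodule.mem_span_range_iff_exists_fun Λ).mp
    (show x ∈ Submodule.span Λ (Set.range y) from hy ▸ Submodule.mem_top)
  exact ⟨fun i => Submodule.Quotient.mk (c i), by
    simp only [LinearMap.coe_sum, LinearMap.coe_comp, LinearMap.coe_proj, Finset.sum_apply,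
      Function.comp_apply, Function.eval]
    rfl⟩

theorem stmt_13_general {R Λ : Type u} [CommRing R] [IsArtinianRing R] [Ring Λ] [Algebra R Λ]
    [Module.Finite R Λ] (C : Set (ModuleCat.{u} Λ))
    (hfg : ∀ X ∈ C, Module.Finite Λ ↥X)
    (hsum : ∀ (k : ℕ) (f : Fin k → ModuleCat.{u} Λ), (∀ i, f i ∈ C) →
      ModuleCat.of Λ (∀ i, ↥(f i)) ∈ C) :
    ((∀ X ∈ C, ∀ p : Submodule Λ ↥X, ModuleCat.of Λ ↥p ∈ C) ∧
      (∀ X ∈ C, ∀ (Z : ModuleCat.{u} Λ) (g : ↥X →ₗ[Λ] ↥Z), Function.Surjective g → Z ∈ C)) ↔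
      (∃ I : TwoSidedIdeal Λ, ∀ X : ModuleCat.{u} Λ,
        X ∈ C ↔ Module.Finite Λ ↥X ∧ ∀ a ∈ I, ∀ x : ↥X, a • x = 0) := by
  have : IsArtinianRing Λ := .of_finite R Λ
  constructor
  · rintro ⟨hsub, hquot⟩
    refine ⟨(annihilatorOfClass C).toTwoSided, fun X => ⟨fun hX => ⟨hfg X hX, ?_⟩, ?_⟩⟩
    · simp only [Ideal.mem_toTwoSided, mem_annihilatorOfClass]
      exact fun a ha => ha X hX
    · rintro ⟨hX, hann⟩
      simp only [Ideal.mem_toTwoSided] at hann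
      obtain ⟨n, g, hg⟩ := Module.Finite.exists_surjective_pi_quotient _ hann
      exact hquot _ (hsum n _ fun _ => quotient_annihilatorOfClass_mem C hsub hquot hsum) X g hg
  · rintro ⟨I, hI⟩
    refine ⟨fun X hX p => ?_, fun X hX Z g hg => ?_⟩
    · obtain ⟨_, hann⟩ := (hI X).mp hX
      exact (hI _).mpr ⟨inferInstance, fun a ha x => Subtype.ext (hann a ha x)⟩
    · obtain ⟨_, hann⟩ := (hI X).mp hX
      refine (hI Z).mpr ⟨Module.Finite.of_surjective g hg, fun a ha z => ?_⟩
      obtain ⟨x, rfl⟩ := hg z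
      rw [← map_smul, hann a ha x, map_zero]

/-- Let `Λ` be an Artin algebra and `C` a class of finitely generated left `Λ`-modules
closed under isomorphisms and finite direct sums.  Then `C` is closed under submodules and
factor modules if and only if there is a two-sided ideal `I` of `Λ` such that `C` is exactly
the class of finitely generated left `Λ`-modules annihilated by `I`. -/
theorem stmt_13 {R Λ : Type u} [CommRing R] [IsArtinianRing R] [Ring Λ] [Algebra R Λ]
    [Module.Finite R Λ] (C : Set (ModuleCat.{u} Λ))
    (hfg : ∀ X ∈ C, Module.Finite Λ ↥X)
    (hiso : ∀ X Y : ModuleCat.{u} Λ, X ∈ C → Nonempty (↥X ≃ₗ[Λ] ↥Y) → Y ∈ C)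
    (hsum : ∀ (k : ℕ) (f : Fin k → ModuleCat.{u} Λ), (∀ i, f i ∈ C) →
      ModuleCat.of Λ (∀ i, ↥(f i)) ∈ C) :
    ((∀ X ∈ C, ∀ p : Submodule Λ ↥X, ModuleCat.of Λ ↥p ∈ C) ∧
      (∀ X ∈ C, ∀ (Z : ModuleCat.{u} Λ) (g : ↥X →ₗ[Λ] ↥Z), Function.Surjective g → Z ∈ C)) ↔
      (∃ I : TwoSidedIdeal Λ, ∀ X : ModuleCat.{u} Λ,
        X ∈ C ↔ Module.Finite Λ ↥X ∧ ∀ a ∈ I, ∀ x : ↥X, a • x = 0) :=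
  stmt_13_general (R := R) C hfg hsum
end

section
/- Let Λ be an Artin algebra and X an indecomposable finitely generated left Λ-module. Then X is both projective and injective if and only if the class C of all finitely generated left Λ-modules having no direct summand isomorphic to X is closed under submodules and under factor modules (i.e., for every Y ∈ C, no submodule of Y and no quotient module of Y has a direct summand isomorphic to X). -/
open CategoryTheory

universe u

/-- A module is indecomposable if it is nonzero and is not isomorphic to the direct sum of
two nonzero modules. -/
def IsIndecomposableModule (Λ : Type u) [Ring Λ] (X : Type u) [AddCommGroup X]
    [Module Λ X] : Prop :=
  Nontrivial X ∧
    ∀ Y Z : ModuleCat.{u} Λ, Nonempty (X ≃ₗ[Λ] ↥Y × ↥Z) → Subsingleton ↥Y ∨ Subsingleton ↥Z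

/-- `Y` has a direct summand isomorphic to `X`. -/
def HasSummandIso (Λ : Type u) [Ring Λ] (X : Type u) [AddCommGroup X] [Module Λ X]
    (Y : Type u) [AddCommGroup Y] [Module Λ Y] : Prop :=
  ∃ Z : ModuleCat.{u} Λ, Nonempty (Y ≃ₗ[Λ] X × ↥Z)

section Aux

variable {Λ : Type u} [Ring Λ]

/-- Transport `HasSummandIso` along a linear equivalence of the ambient module. -/
theorem hasSummandIso_congr {X Y Y' : Type u} [AddCommGroup X] [Module Λ X]
    [AddCommGroup Y] [Module Λ Y] [AddCommGroup Y'] [Module Λ Y']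
    (e : Y ≃ₗ[Λ] Y') (h : HasSummandIso Λ X Y) : HasSummandIso Λ X Y' := by
  obtain ⟨Z, ⟨w⟩⟩ := h
  exact ⟨Z, ⟨e.symm.trans w⟩⟩

/-- `X ≃ₗ X × Z` whenever `Z` is a subsingleton. -/
def prodSubsingletonEquiv (X Z : Type u) [AddCommGroup X] [Module Λ X]
    [AddCommGroup Z] [Module Λ Z] [Subsingleton Z] : X ≃ₗ[Λ] X × Z where
  toFun x := (x, 0)
  map_add' x y := by ext <;> simp
  map_smul' r x := by ext <;> simp
  invFun p := p.1
  left_inv x := rfl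
  right_inv p := Prod.ext rfl (Subsingleton.elim _ _)

theorem hasSummandIso_self (X : Type u) [AddCommGroup X] [Module Λ X] :
    HasSummandIso Λ X X :=
  ⟨ModuleCat.of Λ PUnit, ⟨prodSubsingletonEquiv X PUnit⟩⟩

/-- A retraction `r` of a section `s` yields a decomposition `Y ≃ X × ker r`. -/
noncomputable def splitEquiv {X Y : Type u} [AddCommGroup X] [Module Λ X]
    [AddCommGroup Y] [Module Λ Y] (r : Y →ₗ[Λ] X) (s : X →ₗ[Λ] Y)
    (h : ∀ x, r (s x) = x) : Y ≃ₗ[Λ] X × ↥(LinearMap.ker r) where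
  toFun y := (r y, ⟨y - s (r y), by simp [LinearMap.mem_ker, h]⟩)
  map_add' y z := by ext <;> simp <;> abel
  map_smul' c y := by ext <;> simp [smul_sub]
  invFun p := s p.1 + ↑p.2
  left_inv y := by simp
  right_inv p := by
    obtain ⟨x, ⟨k, hk⟩⟩ := p
    have hk' : r k = 0 := LinearMap.mem_ker.mp hk
    ext
    · simp [hk', h]
    · simp [hk', h]

theorem hasSummandIso_of_split {X Y : Type u} [AddCommGroup X] [Module Λ X]
    [AddCommGroup Y] [Module Λ Y] (s : X →ₗ[Λ] Y) (r : Y →ₗ[Λ] X)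
    (h : ∀ x, r (s x) = x) : HasSummandIso Λ X Y :=
  ⟨ModuleCat.of Λ ↥(LinearMap.ker r), ⟨splitEquiv r s h⟩⟩

/-- The socle of a module: the supremum of all atoms of the submodule lattice. -/
noncomputable def socle (Λ : Type u) [Ring Λ] (M : Type u) [AddCommGroup M]
    [Module Λ M] : Submodule Λ M :=
  sSup {S : Submodule Λ M | IsAtom S}

theorem map_submodule_strictMono {M N : Type u} [AddCommGroup M] [Module Λ M]
    [AddCommGroup N] [Module Λ N] (f : M →ₗ[Λ] N) (hf : Function.Injective f) :
    StrictMono (Submodule.map f) := by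
  have hmono : Monotone (Submodule.map f) := fun a b hab => Submodule.map_mono hab
  exact hmono.strictMono_of_injective (Submodule.map_injective_of_injective hf)

theorem isAtom_map {M N : Type u} [AddCommGroup M] [Module Λ M]
    [AddCommGroup N] [Module Λ N] (f : M →ₗ[Λ] N) (hf : Function.Injective f)
    {S : Submodule Λ M} (hS : IsAtom S) : IsAtom (Submodule.map f S) := by
  constructor
  · intro hbot
    apply hS.1
    apply Submodule.map_injective_of_injective hf
    rw [hbot, Submodule.map_bot]
  · intro T hT
    have h1 : Submodule.map f (Submodule.comap f T ⊓ S) = T := by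
      rw [Submodule.map_inf f hf, Submodule.map_comap_eq]
      have hTr : T ≤ LinearMap.range f := hT.le.trans (LinearMap.map_le_range)
      rw [inf_eq_right.mpr hTr]
      exact inf_eq_left.mpr hT.le
    have h2 : Submodule.comap f T ⊓ S < S := by
      rcases lt_or_eq_of_le (inf_le_right : Submodule.comap f T ⊓ S ≤ S) with h | h
      · exact h
      · exfalso; rw [h] at h1; exact hT.ne h1.symm
    rw [← h1, hS.2 _ h2, Submodule.map_bot]

theorem isAtom_comap {M N : Type u} [AddCommGroup M] [Module Λ M]
    [AddCommGroup N] [Module Λ N] (f : M →ₗ[Λ] N) (hf : Function.Injective f)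
    {T : Submodule Λ N} (hT : IsAtom T) (hle : T ≤ LinearMap.range f) :
    IsAtom (Submodule.comap f T) := by
  have hmc : Submodule.map f (Submodule.comap f T) = T := Submodule.map_comap_eq_self hle
  constructor
  · intro hbot
    apply hT.1
    rw [← hmc, hbot, Submodule.map_bot]
  · intro b hb
    have : Submodule.map f b < T := by
      rw [← hmc]; exact map_submodule_strictMono f hf hb
    have hb0 := hT.2 _ this
    apply Submodule.map_injective_of_injective hf
    rw [hb0, Submodule.map_bot]

theorem map_sSup' {M N : Type u} [AddCommGroup M] [Module Λ M]
    [AddCommGroup N] [Module Λ N] (f : M →ₗ[Λ] N) (s : Set (Submodule Λ M)) :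
    Submodule.map f (sSup s) = sSup (Submodule.map f '' s) := by
  rw [sSup_eq_iSup', Submodule.map_iSup, sSup_image']

theorem comap_sSup_of_le_range {M N : Type u} [AddCommGroup M] [Module Λ M]
    [AddCommGroup N] [Module Λ N] (f : M →ₗ[Λ] N) (hf : Function.Injective f)
    (s : Set (Submodule Λ N)) (hs : ∀ T ∈ s, T ≤ LinearMap.range f) :
    Submodule.comap f (sSup s) = sSup (Submodule.comap f '' s) := by
  apply Submodule.map_injective_of_injective hf
  rw [Submodule.map_comap_eq_self (by exact sSup_le hs), map_sSup', Set.image_image]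
  have himg : (fun T => Submodule.map f (Submodule.comap f T)) '' s = s := by
    rw [show (fun T => Submodule.map f (Submodule.comap f T)) '' s = id '' s from
      Set.image_congr (fun T hT => Submodule.map_comap_eq_self (hs T hT)), Set.image_id]
  rw [himg]

/-- The key contradiction: if `X` embeds essentially into `X × Z` (in the sense that the
range of `f` contains every atom), `X` and `Z` are Artinian, and `Z` is nontrivial,
then we get `False`. -/
theorem essential_summand_contradiction {X Z : Type u} [AddCommGroup X] [Module Λ X]
    [AddCommGroup Z] [Module Λ Z] [IsArtinian Λ X] [IsArtinian Λ Z] [Nontrivial Z]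
    (f : X →ₗ[Λ] X × Z) (hf : Function.Injective f)
    (hess : ∀ T : Submodule Λ (X × Z), IsAtom T → T ≤ LinearMap.range f) : False := by
  have hatomicZ : IsAtomic (Submodule Λ Z) :=
    isAtomic_of_orderBot_wellFounded_lt (IsWellFounded.wf)
  set A : Submodule Λ X := socle Λ X with hA
  set W : Submodule Λ Z := socle Λ Z with hWdef
  -- W ≠ ⊥
  obtain ⟨S₀, hS₀⟩ : ∃ S : Submodule Λ Z, IsAtom S := by
    rcases hatomicZ.eq_bot_or_exists_atom_le (⊤ : Submodule Λ Z) with h | ⟨S, hS, _⟩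
    · exact absurd h (by simp)
    · exact ⟨S, hS⟩
  have hW : W ≠ ⊥ := by
    intro h
    exact hS₀.1 (le_bot_iff.mp (h ▸ le_sSup (by exact hS₀)))
  -- the generating set of atoms
  set 𝒮 : Set (Submodule Λ (X × Z)) :=
      (Submodule.map (LinearMap.inl Λ X Z) '' {S : Submodule Λ X | IsAtom S}) ∪
      (Submodule.map (LinearMap.inr Λ X Z) '' {S : Submodule Λ Z | IsAtom S}) with h𝒮def
  have h𝒮atom : ∀ T ∈ 𝒮, IsAtom T := by
    intro T hT
    simp only [h𝒮def, Set.mem_union, Set.mem_image, Set.mem_setOf_eq] at hT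
    rcases hT with ⟨S, hS, rfl⟩ | ⟨S, hS, rfl⟩
    · exact isAtom_map _ LinearMap.inl_injective hS
    · exact isAtom_map _ LinearMap.inr_injective hS
  have h𝒮range : ∀ T ∈ 𝒮, T ≤ LinearMap.range f := fun T hT => hess T (h𝒮atom T hT)
  have hM : A.prod W = sSup 𝒮 := by
    rw [LinearMap.prod_eq_sup_map, hA, hWdef, socle, socle, map_sSup', map_sSup',
      h𝒮def, sSup_union]
  have hMrange : A.prod W ≤ LinearMap.range f := by
    rw [hM]; exact sSup_le h𝒮range
  set P : Submodule Λ X := Submodule.comap f (A.prod W) with hPdef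
  have hmapP : Submodule.map f P = A.prod W := Submodule.map_comap_eq_self hMrange
  have hPA : P ≤ A := by
    rw [hPdef, hM, comap_sSup_of_le_range f hf 𝒮 h𝒮range]
    apply sSup_le
    rintro T' ⟨T, hT, rfl⟩
    exact le_sSup (isAtom_comap f hf (h𝒮atom T hT) (h𝒮range T hT))
  -- the two injections
  let eP : ↥P ≃ₗ[Λ] ↥(A.prod W) :=
    (Submodule.equivMapOfInjective f hf P).trans (LinearEquiv.ofEq _ _ hmapP)
  let μ : ↥(A.prod W) →ₗ[Λ] ↥A :=
    (Submodule.inclusion hPA) ∘ₗ eP.symm.toLinearMap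
  have hμ : Function.Injective μ :=
    (Submodule.inclusion_injective hPA).comp eP.symm.injective
  let ν : ↥A →ₗ[Λ] ↥(A.prod W) :=
    LinearMap.codRestrict (A.prod W) ((LinearMap.inl Λ X Z) ∘ₗ A.subtype)
      (fun a => by
        simp only [LinearMap.comp_apply, LinearMap.inl_apply, Submodule.coe_subtype]
        exact Submodule.mem_prod.mpr ⟨a.2, W.zero_mem⟩)
  have hν : Function.Injective ν := by
    intro a b hab
    have : ((a : X), (0 : Z)) = ((b : X), (0 : Z)) := congrArg Subtype.val hab
    exact Subtype.ext (congrArg Prod.fst this)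
  -- the endomorphism
  have hκinj : Function.Injective (ν ∘ₗ μ) := hν.comp hμ
  have hκsurj : Function.Surjective (ν ∘ₗ μ) :=
    IsArtinian.surjective_of_injective_endomorphism _ hκinj
  obtain ⟨w, hwW, hw0⟩ := Submodule.exists_mem_ne_zero_of_ne_bot hW
  obtain ⟨t, ht⟩ := hκsurj ⟨(0, w), Submodule.mem_prod.mpr ⟨A.zero_mem, hwW⟩⟩
  have : ((0 : X), (0 : Z)).2 = w := by
    have h1 : (((ν ∘ₗ μ) t : X × Z)) = ((0 : X), w) := congrArg Subtype.val ht
    have h2 : ((ν (μ t) : X × Z)) = (((μ t : X)), (0 : Z)) := rfl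
    rw [LinearMap.comp_apply, h2] at h1
    exact congrArg Prod.snd h1
  exact hw0 this.symm

/-- Atoms are below any "essential" submodule. -/
theorem atom_le_of_essential {M : Type u} [AddCommGroup M] [Module Λ M]
    {E : Submodule Λ M} (hE : ∀ L : Submodule Λ M, L ≠ ⊥ → L ⊓ E ≠ ⊥)
    {T : Submodule Λ M} (hT : IsAtom T) : T ≤ E := by
  have h1 : T ⊓ E ≠ ⊥ := hE T hT.1
  rcases lt_or_eq_of_le (inf_le_left : T ⊓ E ≤ T) with h | h
  · exact absurd (hT.2 _ h) h1
  · rw [← h]; exact inf_le_right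

end Aux

/-- Let `Λ` be an Artin algebra and `X` an indecomposable finitely generated left `Λ`-module.
Then `X` is projective and injective if and only if the class of finitely generated modules
having no direct summand isomorphic to `X` is closed under submodules and factor modules. -/
theorem stmt_14 {R Λ : Type u} [CommRing R] [IsArtinianRing R] [Ring Λ] [Algebra R Λ]
    [Module.Finite R Λ] (X : Type u) [AddCommGroup X] [Module Λ X] [Module.Finite Λ X]
    (hX : IsIndecomposableModule Λ X) :
    (Module.Projective Λ X ∧ Module.Injective Λ X) ↔
      (∀ Y : ModuleCat.{u} Λ, Module.Finite Λ ↥Y → ¬ HasSummandIso Λ X ↥Y →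
        (∀ p : Submodule Λ ↥Y, ¬ HasSummandIso Λ X ↥p) ∧
        (∀ (Q : ModuleCat.{u} Λ) (g : ↥Y →ₗ[Λ] ↥Q), Function.Surjective g →
          ¬ HasSummandIso Λ X ↥Q)) := by
  haveI : IsArtinianRing Λ := IsArtinianRing.of_finite R Λ
  constructor
  · rintro ⟨hproj, hinj⟩ Y hYfin hYns
    constructor
    · intro p hp
      apply hYns
      obtain ⟨Z, ⟨e⟩⟩ := hp
      set m : X →ₗ[Λ] ↥Y := p.subtype ∘ₗ (e.symm.toLinearMap ∘ₗ LinearMap.inl Λ X ↥Z)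
        with hm
      have hminj : Function.Injective m := by
        apply Subtype.val_injective.comp
        exact e.symm.injective.comp LinearMap.inl_injective
      obtain ⟨r, hr⟩ := hinj.out m hminj LinearMap.id
      exact hasSummandIso_of_split m r hr
    · intro Q g hg hq
      apply hYns
      obtain ⟨Z, ⟨e⟩⟩ := hq
      set π : ↥Q →ₗ[Λ] X := (LinearMap.fst Λ X ↥Z) ∘ₗ e.toLinearMap with hπ
      have hπg : Function.Surjective (π ∘ₗ g) := by
        apply Function.Surjective.comp (g := π)
        · exact (Prod.fst_surjective).comp e.surjective
        · exact hg
      obtain ⟨s, hs⟩ := Module.projective_lifting_property (π ∘ₗ g) LinearMap.id hπg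
      exact hasSummandIso_of_split s (π ∘ₗ g) (fun x => by
        have := congrArg (fun (u : X →ₗ[Λ] X) => u x) hs
        simpa using this)
  · intro hrhs
    obtain ⟨hXnt, _⟩ := hX
    constructor
    · -- projectivity
      obtain ⟨n, f, hf⟩ := Module.Finite.exists_fin' Λ X
      by_cases h : HasSummandIso Λ X (Fin n → Λ)
      · obtain ⟨Z, ⟨e⟩⟩ := h
        exact Module.Projective.of_split (e.symm.toLinearMap ∘ₗ LinearMap.inl Λ X ↥Z)
          ((LinearMap.fst Λ X ↥Z) ∘ₗ e.toLinearMap) (by ext x; simp)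
      · exact absurd (hasSummandIso_self X)
          ((hrhs (ModuleCat.of Λ (Fin n → Λ))
            (by show Module.Finite Λ (Fin n → Λ); infer_instance)
            (by exact h)).2 (ModuleCat.of Λ X) f hf)
    · -- injectivity
      rw [← Module.Baer.iff_injective]
      intro I g
      by_contra hext
      -- pushout of g along the inclusion I → Λ
      set W : Submodule Λ (Λ × X) := LinearMap.range (LinearMap.prod I.subtype (-g))
        with hWdef
      set mk : (Λ × X) →ₗ[Λ] ((Λ × X) ⧸ W) := W.mkQ with hmkdef
      set ι₀ : X →ₗ[Λ] ((Λ × X) ⧸ W) := mk ∘ₗ LinearMap.inr Λ Λ X with hι₀def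
      have hι₀ker : ∀ x : X, ι₀ x = 0 → x = 0 := by
        intro x hx
        have hmem : (LinearMap.inr Λ Λ X) x ∈ W := by
          rw [← Submodule.ker_mkQ W, LinearMap.mem_ker]
          exact hx
        obtain ⟨i, hi⟩ := hmem
        have h1 : (i : Λ) = 0 := congrArg Prod.fst hi
        have h2 : -g i = x := congrArg Prod.snd hi
        rw [show i = 0 from Subtype.ext h1] at h2
        simpa using h2.symm
      have hι₀inj : Function.Injective ι₀ := by
        rw [← LinearMap.ker_eq_bot, eq_bot_iff]
        intro x hx
        exact hι₀ker x (LinearMap.mem_ker.mp hx)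
      have hns0 : ∀ r : ((Λ × X) ⧸ W) →ₗ[Λ] X, ¬ (∀ x, r (ι₀ x) = x) := by
        intro r hr
        apply hext
        refine ⟨r ∘ₗ (mk ∘ₗ LinearMap.inl Λ Λ X), ?_⟩
        intro x mem
        have key : mk (x, 0) = mk (0, g ⟨x, mem⟩) := by
          rw [hmkdef, Submodule.mkQ_apply, Submodule.mkQ_apply,
            Submodule.Quotient.eq]
          exact ⟨⟨x, mem⟩, by simp⟩
        show r (mk (x, 0)) = g ⟨x, mem⟩
        rw [key]
        exact hr (g ⟨x, mem⟩)
      -- choose a maximal submodule N intersecting the image of X trivially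
      set S : Set (Submodule Λ ((Λ × X) ⧸ W)) :=
        {N | N ⊓ LinearMap.range ι₀ = ⊥} with hSdef
      obtain ⟨N, hNmax⟩ := zorn_le₀ S (by
        intro c hcS hc
        rcases Set.eq_empty_or_nonempty c with rfl | hne
        · exact ⟨⊥, by simp [hSdef], by simp⟩
        · refine ⟨sSup c, ?_, fun z hz => le_sSup hz⟩
          rw [hSdef, Set.mem_setOf_eq, eq_bot_iff]
          rintro x ⟨hx1, hx2⟩
          obtain ⟨L, hLc, hxL⟩ :=
            (Submodule.mem_sSup_of_directed hne hc.directedOn).mp hx1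
          have : x ∈ L ⊓ LinearMap.range ι₀ := ⟨hxL, hx2⟩
          rwa [hcS hLc] at this)
      have hNS : N ⊓ LinearMap.range ι₀ = ⊥ := hNmax.prop
      set Yq := ((Λ × X) ⧸ W) ⧸ N with hYqdef
      set ι : X →ₗ[Λ] Yq := N.mkQ ∘ₗ ι₀ with hιdef
      have hιinj : Function.Injective ι := by
        rw [← LinearMap.ker_eq_bot, eq_bot_iff]
        intro x hx
        have hx0 : ι x = 0 := LinearMap.mem_ker.mp hx
        have hx' : ι₀ x ∈ N := by
          rw [← Submodule.ker_mkQ N, LinearMap.mem_ker]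
          exact hx0
        have hmem : ι₀ x ∈ N ⊓ LinearMap.range ι₀ := ⟨hx', ⟨x, rfl⟩⟩
        rw [hNS] at hmem
        have : x = 0 := hι₀ker x hmem
        simp [this]
      have hns : ∀ r : Yq →ₗ[Λ] X, ¬ (∀ x, r (ι x) = x) := by
        intro r hr
        exact hns0 (r ∘ₗ N.mkQ) hr
      have hess : ∀ L : Submodule Λ Yq, L ≠ ⊥ → L ⊓ LinearMap.range ι ≠ ⊥ := by
        intro L hL
        set L' : Submodule Λ ((Λ × X) ⧸ W) := Submodule.comap N.mkQ L with hL'def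
        have hNL' : N ≤ L' := by
          intro y hy
          show N.mkQ y ∈ L
          have : N.mkQ y = 0 := by
            rw [← LinearMap.mem_ker, N.ker_mkQ]; exact hy
          rw [this]; exact L.zero_mem
        have hL'N : L' ≠ N := by
          intro h
          apply hL
          have : L = Submodule.map N.mkQ L' :=
            (Submodule.map_comap_eq_of_surjective (Submodule.mkQ_surjective N) L).symm
          rw [this, h, eq_bot_iff]
          rintro y ⟨z, hz, rfl⟩
          have : N.mkQ z = 0 := by
            rw [← LinearMap.mem_ker, N.ker_mkQ]; exact hz
          simp [this]
        have hL'notS : L' ∉ S := by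
          intro hmem
          exact hL'N (hNmax.eq_of_ge hmem hNL')
        rw [hSdef, Set.mem_setOf_eq] at hL'notS
        obtain ⟨y, ⟨hyL', ⟨x, rfl⟩⟩, hy0⟩ :=
          Submodule.exists_mem_ne_zero_of_ne_bot hL'notS
        intro hbot
        have h1 : N.mkQ (ι₀ x) ∈ L ⊓ LinearMap.range ι := by
          constructor
          · exact hyL'
          · exact ⟨x, rfl⟩
        rw [hbot] at h1
        have h2 : ι₀ x ∈ N := by
          have : N.mkQ (ι₀ x) = 0 := h1
          rwa [← LinearMap.mem_ker, N.ker_mkQ] at this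
        have : ι₀ x ∈ N ⊓ LinearMap.range ι₀ := ⟨h2, ⟨x, rfl⟩⟩
        rw [hNS] at this
        exact hy0 this
      -- now use the hypothesis
      haveI hYqfin : Module.Finite Λ Yq := by
        have h1 : Module.Finite Λ (Λ × X) := inferInstance
        have h2 : Module.Finite Λ ((Λ × X) ⧸ W) :=
          Module.Finite.of_surjective mk (Submodule.mkQ_surjective W)
        exact Module.Finite.of_surjective N.mkQ (Submodule.mkQ_surjective N)
      by_cases hYs : HasSummandIso Λ X Yq
      · obtain ⟨Z, ⟨e⟩⟩ := hYs
        rcases subsingleton_or_nontrivial ↥Z with hZ | hZ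
        · -- Z trivial: the composite X → Yq → X × Z → X is injective, hence bijective,
          -- giving a retraction of ι, contradiction
          set ε : Yq ≃ₗ[Λ] X := e.trans (prodSubsingletonEquiv X ↥Z).symm with hε
          set φ : X →ₗ[Λ] X := ε.toLinearMap ∘ₗ ι with hφ
          have hφinj : Function.Injective φ := ε.injective.comp hιinj
          have hφsurj : Function.Surjective φ :=
            IsArtinian.surjective_of_injective_endomorphism φ hφinj
          set ρ : X ≃ₗ[Λ] X := LinearEquiv.ofBijective φ ⟨hφinj, hφsurj⟩ with hρ
          apply hns (ρ.symm.toLinearMap ∘ₗ ε.toLinearMap)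
          intro x
          show ρ.symm (ε (ι x)) = x
          have h1 : ε (ι x) = ρ x := rfl
          rw [h1]
          exact ρ.symm_apply_apply x
        · -- Z nontrivial: socle contradiction
          haveI : Module.Finite Λ ↥Z := by
            apply Module.Finite.of_surjective
              ((LinearMap.snd Λ X ↥Z) ∘ₗ e.toLinearMap)
            exact (Prod.snd_surjective).comp e.surjective
          set f : X →ₗ[Λ] X × ↥Z := e.toLinearMap ∘ₗ ι with hfdef
          have hfinj : Function.Injective f := e.injective.comp hιinj
          refine essential_summand_contradiction f hfinj ?_
          intro T hT
          set oi : Submodule Λ Yq ≃o Submodule Λ (X × ↥Z) :=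
            Submodule.orderIsoMapComap e with hoi
          have hTatom' : IsAtom (oi.symm T) := by
            constructor
            · intro hbot
              apply hT.1
              have := congrArg oi (hbot)
              rwa [oi.apply_symm_apply, map_bot] at this
            · intro b hb
              have hb' : oi b < T := by
                have := oi.strictMono hb
                rwa [oi.apply_symm_apply] at this
              have := hT.2 _ hb'
              have := congrArg oi.symm this
              rwa [oi.symm_apply_apply, map_bot] at this
          have h1 : oi.symm T ≤ LinearMap.range ι :=
            atom_le_of_essential hess hTatom'
          have h2 : oi (oi.symm T) ≤ oi (LinearMap.range ι) := oi.monotone h1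
          rw [oi.apply_symm_apply] at h2
          have h3 : oi (LinearMap.range ι) = LinearMap.range f := by
            show Submodule.map e.toLinearMap (LinearMap.range ι) = LinearMap.range f
            rw [hfdef]
            exact (LinearMap.range_comp ι e.toLinearMap).symm
          rwa [h3] at h2
      · have := (hrhs (ModuleCat.of Λ Yq) (by exact hYqfin) (by exact hYs)).1
          (LinearMap.range ι)
        exact this (hasSummandIso_congr (LinearEquiv.ofInjective ι hιinj)
          (hasSummandIso_self X))
end

section
/- Let Λ ⊆ Γ be Artin algebras over the same commutative Artinian base ring, where Λ is a subring of Γ containing the identity of Γ, and assume the Jacobson radicals coincide: J_Λ = J_Γ (as subsets of Γ; in particular J_Γ ⊆ Λ). Then for every finitely generated left Γ-module Y, the natural Γ-linear map δ : Y → Hom_Λ(Γ, Y), defined by δ(y)(γ) = γ·y, is a split monomorphism of Γ-modules; here Hom_Λ(Γ, Y) denotes the coinduced module of Λ-linear maps from Γ (with its left Λ-module structure by left multiplication) to Y, with left Γ-action (γ₀·f)(γ) := f(γ·γ₀). -/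
/-!
If `j` lies in `J = J_Γ ⊆ Λ`, then so does `γ * j` for every `γ`, and `Λ`-linearity of
`f ∈ Hom_Λ(Γ, Y)` gives `(j • f) γ = f (γ * j) = γ • (j • f 1)`, i.e. `j • f = δ (j • f 1)`.
Hence `f - δ (f 1)` is annihilated by `J`, so `Hom_Λ(Γ, Y) = im δ + S` with `S` the submodule
killed by `J`. As `Γ` is Artinian, `Γ ⧸ J` is semisimple, hence so is `S`; a complement of
`im δ ∩ S` in `S` is then a complement of `im δ`, and projecting onto `im δ` along it splits `δ`.
-/

universe u

/-- The Jacobson radical of a ring: the intersection of its maximal left ideals. -/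
def jacobsonRadical (R : Type u) [Ring R] : Ideal R :=
  sInf {I : Ideal R | I.IsMaximal}

variable {Λ Γ : Type u} [Ring Λ] [Ring Γ]

/-- The coinduced module `Hom_Λ(Γ, Y)` along a ring homomorphism `φ : Λ →+* Γ`: additive maps
`Γ → Y` that are `Λ`-linear for the `Λ`-module structures obtained by restriction of scalars
along `φ`. -/
def coindCarrier (φ : Λ →+* Γ) (Y : Type u) [AddCommGroup Y] [Module Γ Y] :
    AddSubgroup (Γ →+ Y) where
  carrier := {f | ∀ (l : Λ) (g : Γ), f (φ l * g) = φ l • f g}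
  add_mem' := by
    intro f g hf hg l x
    simp [hf l x, hg l x, smul_add]
  zero_mem' := by intro l x; simp
  neg_mem' := by
    intro f hf l x
    simp [hf l x]

/-- The natural map `δ : Y → Hom_Λ(Γ, Y)`, `δ(y)(γ) = γ • y`. -/
def coindDelta (φ : Λ →+* Γ) (Y : Type u) [AddCommGroup Y] [Module Γ Y] (y : Y) :
    ↥(coindCarrier φ Y) :=
  ⟨{ toFun := fun g => g • y
     map_zero' := zero_smul Γ y
     map_add' := fun a b => add_smul a b y },
   fun l g => mul_smul (φ l) g y⟩

/-- The left `Γ`-action on `Hom_Λ(Γ, Y)` given by `(γ₀ • f) (γ) = f (γ * γ₀)`. -/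
def coindSMul (φ : Λ →+* Γ) (Y : Type u) [AddCommGroup Y] [Module Γ Y] (γ₀ : Γ)
    (f : ↥(coindCarrier φ Y)) : ↥(coindCarrier φ Y) :=
  ⟨(f : Γ →+ Y).comp (AddMonoidHom.mulRight γ₀), by
    intro l g
    simpa [mul_assoc] using f.2 l (g * γ₀)⟩


theorem exists_isCompl_of_sup_eq_top {α : Type*} [Lattice α] [BoundedOrder α] {a s : α}
    [ComplementedLattice (Set.Iic s)] (h : a ⊔ s = ⊤) : ∃ c, IsCompl a c := by
  obtain ⟨⟨c, hcs⟩, hc⟩ := exists_isCompl (⟨a ⊓ s, inf_le_right⟩ : Set.Iic s)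
  have hdisj : a ⊓ s ⊓ c = ⊥ := congrArg Subtype.val hc.inf_eq_bot
  have hsup : a ⊓ s ⊔ c = s := congrArg Subtype.val hc.sup_eq_top
  refine ⟨c, ?_, ?_⟩
  · rw [disjoint_iff, ← hdisj, inf_assoc, inf_eq_right.mpr hcs]
  · rw [codisjoint_iff, ← h, ← hsup, ← sup_assoc, sup_inf_self]

theorem LinearMap.exists_leftInverse_of_injective_of_isCompl {R M N : Type*} [Ring R]
    [AddCommGroup M] [Module R M] [AddCommGroup N] [Module R N] {f : M →ₗ[R] N}
    (hf : Function.Injective f) {C : Submodule R N} (h : IsCompl (range f) C) :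
    ∃ g : N →ₗ[R] M, g ∘ₗ f = id := by
  refine ⟨ofIsCompl h (LinearEquiv.ofInjective f hf).symm.toLinearMap 0, ext fun x => ?_⟩
  have hfx : f x = ((⟨f x, mem_range_self f x⟩ : range f) : N) := rfl
  rw [comp_apply, hfx, ofIsCompl_apply_left]
  exact (LinearEquiv.ofInjective f hf).symm_apply_apply x

namespace Submodule

variable {R M : Type*} [Ring R] [AddCommGroup M] [Module R M]

def torsionByIdeal (I : Ideal R) [I.IsTwoSided] : Submodule R M where
  carrier := {x | ∀ a ∈ I, a • x = 0}
  add_mem' hx hy a ha := by rw [smul_add, hx a ha, hy a ha, add_zero]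
  zero_mem' a _ := smul_zero a
  smul_mem' r x hx a ha := by rw [← mul_smul]; exact hx _ (I.mul_mem_right r ha)

theorem isTorsionBySet_torsionByIdeal (I : Ideal R) [I.IsTwoSided] :
    Module.IsTorsionBySet R (torsionByIdeal (M := M) I) I :=
  fun x a => Subtype.ext (x.2 a a.2)

instance (I : Ideal R) [I.IsTwoSided] [IsSemisimpleRing (R ⧸ I)] :
    IsSemisimpleModule R (torsionByIdeal (M := M) I) :=
  (isTorsionBySet_torsionByIdeal I).isSemisimpleModule_iff.mp <|
    letI := (isTorsionBySet_torsionByIdeal (M := M) I).module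
    inferInstance

theorem exists_isCompl_of_sup_torsionByIdeal_eq_top {I : Ideal R} [I.IsTwoSided]
    [IsSemisimpleRing (R ⧸ I)] {A : Submodule R M} (h : A ⊔ torsionByIdeal I = ⊤) :
    ∃ C, IsCompl A C :=
  have := (torsionByIdeal (M := M) I).mapIic.complementedLattice_iff.mp inferInstance
  exists_isCompl_of_sup_eq_top h

end Submodule

section Coinduced

variable (φ : Λ →+* Γ) (Y : Type u) [AddCommGroup Y] [Module Γ Y]

instance coindModule : Module Γ (coindCarrier φ Y) where
  smul := coindSMul φ Y
  one_smul f := Subtype.ext <| AddMonoidHom.ext fun g =>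
    show (f : Γ →+ Y) (g * 1) = (f : Γ →+ Y) g by rw [mul_one]
  mul_smul a b f := Subtype.ext <| AddMonoidHom.ext fun g =>
    show (f : Γ →+ Y) (g * (a * b)) = (f : Γ →+ Y) (g * a * b) by rw [mul_assoc]
  smul_zero _ := rfl
  smul_add _ _ _ := rfl
  add_smul a b f := Subtype.ext <| AddMonoidHom.ext fun g =>
    show (f : Γ →+ Y) (g * (a + b)) = (f : Γ →+ Y) (g * a) + (f : Γ →+ Y) (g * b) by
      rw [mul_add, map_add]
  zero_smul f := Subtype.ext <| AddMonoidHom.ext fun g =>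
    show (f : Γ →+ Y) (g * 0) = 0 by rw [mul_zero, map_zero]

theorem coindCarrier_smul_apply (γ₀ γ : Γ) (f : coindCarrier φ Y) :
    ((γ₀ • f : coindCarrier φ Y) : Γ →+ Y) γ = (f : Γ →+ Y) (γ * γ₀) :=
  rfl

theorem coindDelta_apply (y : Y) (γ : Γ) : (coindDelta φ Y y : Γ →+ Y) γ = γ • y :=
  rfl

def coindDeltaLinearMap : Y →ₗ[Γ] coindCarrier φ Y where
  toFun := coindDelta φ Y
  map_add' y z := Subtype.ext <| AddMonoidHom.ext fun γ => smul_add γ y z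
  map_smul' γ₀ y := Subtype.ext <| AddMonoidHom.ext fun γ => (mul_smul γ γ₀ y).symm

theorem coindDeltaLinearMap_injective : Function.Injective (coindDeltaLinearMap φ Y) :=
  Function.LeftInverse.injective (g := fun f : coindCarrier φ Y => (f : Γ →+ Y) 1)
    (f := coindDeltaLinearMap φ Y) fun y => one_smul Γ y

variable {φ Y}

theorem smul_eq_coindDelta_of_mul_mem_range {j : Γ} (hj : ∀ γ, γ * j ∈ Set.range φ)
    (f : coindCarrier φ Y) : j • f = coindDelta φ Y (j • (f : Γ →+ Y) 1) := by
  refine Subtype.ext <| AddMonoidHom.ext fun γ => ?_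
  obtain ⟨l, hl⟩ := hj γ
  have hf := f.2 l 1
  rw [mul_one] at hf
  rw [coindCarrier_smul_apply, coindDelta_apply, ← hl, hf, hl, mul_smul]

theorem range_coindDelta_sup_torsionByIdeal_eq_top
    (hJ : (Ring.jacobson Γ : Set Γ) ⊆ Set.range φ) :
    LinearMap.range (coindDeltaLinearMap φ Y) ⊔ Submodule.torsionByIdeal (Ring.jacobson Γ) = ⊤ := by
  refine eq_top_iff.mpr fun f _ => ?_
  have hrest : f - coindDeltaLinearMap φ Y ((f : Γ →+ Y) 1) ∈
      Submodule.torsionByIdeal (Ring.jacobson Γ) := fun j hj => by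
    have hj' : ∀ γ, γ * j ∈ Set.range φ := fun γ => hJ ((Ring.jacobson Γ).mul_mem_left γ hj)
    rw [smul_sub, smul_eq_coindDelta_of_mul_mem_range hj', ← map_smul (coindDeltaLinearMap φ Y),
      sub_eq_zero]
    rfl
  have hsum := Submodule.add_mem_sup
    (LinearMap.mem_range_self (coindDeltaLinearMap φ Y) ((f : Γ →+ Y) 1)) hrest
  rwa [add_sub_cancel] at hsum

theorem exists_leftInverse_coindDelta [IsSemiprimaryRing Γ]
    (hJ : (Ring.jacobson Γ : Set Γ) ⊆ Set.range φ) :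
    ∃ ρ : coindCarrier φ Y →ₗ[Γ] Y, ρ ∘ₗ coindDeltaLinearMap φ Y = LinearMap.id := by
  obtain ⟨C, hC⟩ :=
    Submodule.exists_isCompl_of_sup_torsionByIdeal_eq_top
      (range_coindDelta_sup_torsionByIdeal_eq_top (Y := Y) hJ)
  exact LinearMap.exists_leftInverse_of_injective_of_isCompl
    (coindDeltaLinearMap_injective φ Y) hC

end Coinduced

theorem jacobsonRadical_eq_jacobson (R : Type u) [Ring R] :
    jacobsonRadical R = Ring.jacobson R :=
  (Ring.jacobson_eq_sInf_isMaximal R).symm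

theorem stmt_15_general {R : Type u} [CommRing R] [IsArtinianRing R]
    {Λ Γ : Type u} [Ring Λ] [Ring Γ] [Algebra R Λ] [Algebra R Γ]
    [Module.Finite R Γ]
    (φ : Λ →ₐ[R] Γ)
    (hJ : (jacobsonRadical Γ : Set Γ) = ⇑φ '' (jacobsonRadical Λ : Set Λ))
    (Y : Type u) [AddCommGroup Y] [Module Γ Y] :
    ∃ ρ : ↥(coindCarrier φ.toRingHom Y) →+ Y,
      (∀ (γ : Γ) (f : ↥(coindCarrier φ.toRingHom Y)),
          ρ (coindSMul φ.toRingHom Y γ f) = γ • ρ f) ∧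
      ∀ y : Y, ρ (coindDelta φ.toRingHom Y y) = y := by
  have : IsArtinianRing Γ := IsArtinianRing.of_finite R Γ
  have hJ' : (Ring.jacobson Γ : Set Γ) ⊆ Set.range φ.toRingHom := by
    rw [← jacobsonRadical_eq_jacobson, hJ]
    exact Set.image_subset_range _ _
  obtain ⟨ρ, hρ⟩ := exists_leftInverse_coindDelta (Y := Y) hJ'
  exact ⟨ρ.toAddMonoidHom, map_smul ρ, LinearMap.congr_fun hρ⟩

/-- Let `Λ ⊆ Γ` be Artin algebras over the same commutative Artinian base ring `R` (the
inclusion being the injective `R`-algebra homomorphism `φ`), with the same Jacobson radical.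
Then for every finitely generated left `Γ`-module `Y` the natural map
`δ : Y → Hom_Λ(Γ, Y)` is a split monomorphism of `Γ`-modules: it admits an additive,
`Γ`-linear retraction. -/
theorem stmt_15 {R : Type u} [CommRing R] [IsArtinianRing R]
    {Λ Γ : Type u} [Ring Λ] [Ring Γ] [Algebra R Λ] [Algebra R Γ]
    [Module.Finite R Λ] [Module.Finite R Γ]
    (φ : Λ →ₐ[R] Γ) (hinj : Function.Injective φ)
    (hJ : (jacobsonRadical Γ : Set Γ) = ⇑φ '' (jacobsonRadical Λ : Set Λ))
    (Y : Type u) [AddCommGroup Y] [Module Γ Y] [Module.Finite Γ Y] :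
    ∃ ρ : ↥(coindCarrier φ.toRingHom Y) →+ Y,
      (∀ (γ : Γ) (f : ↥(coindCarrier φ.toRingHom Y)),
          ρ (coindSMul φ.toRingHom Y γ f) = γ • ρ f) ∧
      ∀ y : Y, ρ (coindDelta φ.toRingHom Y y) = y :=
  stmt_15_general φ hJ Y
end

section
/- Let C be a category and let C'' ⊆ C' ⊆ C be full subcategories (closed under isomorphisms). Call a full subcategory D of a category E rejective in E if the inclusion functor D → E admits a left adjoint whose unit is an epimorphism (in E) at every object of E, and also admits a right adjoint whose counit is a monomorphism (in E) at every object of E. If C'' is rejective in C' and C' is rejective in C, then C'' is rejective in C. -/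
open CategoryTheory

universe v u

/-- A full subcategory (given by a predicate `Z` on objects) of a category `C` is rejective
if the inclusion functor admits a left adjoint whose unit is an epimorphism at every object
of `C`, and a right adjoint whose counit is a monomorphism at every object of `C`. -/
def IsRejective {C : Type u} [Category.{v} C] (Z : C → Prop) : Prop :=
  (∃ (L : C ⥤ ObjectProperty.FullSubcategory Z) (adj : L ⊣ ObjectProperty.ι Z),
    ∀ X : C, Epi (adj.unit.app X)) ∧
  (∃ (R : C ⥤ ObjectProperty.FullSubcategory Z) (adj : ObjectProperty.ι Z ⊣ R),
    ∀ X : C, Mono (adj.counit.app X))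

namespace CategoryTheory

namespace Adjunction

variable {C D E : Type*} [Category C] [Category D] [Category E]
  {F : C ⥤ D} {G : D ⥤ C} {H : D ⥤ E} {I : E ⥤ D}

lemma epi_comp_unit_app [G.PreservesEpimorphisms] (adj₁ : F ⊣ G) (adj₂ : H ⊣ I)
    (h₁ : ∀ X, Epi (adj₁.unit.app X)) (h₂ : ∀ Y, Epi (adj₂.unit.app Y)) (X : C) :
    Epi ((adj₁.comp adj₂).unit.app X) := by
  rw [comp_unit_app]
  have := h₁ X
  have := h₂ (F.obj X)
  infer_instance

lemma mono_comp_counit_app [H.PreservesMonomorphisms] (adj₁ : F ⊣ G) (adj₂ : H ⊣ I)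
    (h₁ : ∀ Y, Mono (adj₁.counit.app Y)) (h₂ : ∀ X, Mono (adj₂.counit.app X)) (X : E) :
    Mono ((adj₁.comp adj₂).counit.app X) := by
  rw [comp_counit_app]
  have := h₁ (I.obj X)
  have := h₂ X
  infer_instance

end Adjunction

namespace ObjectProperty

variable {C : Type*} [Category C] {P Q : ObjectProperty C}

def fullSubcategoryOfFullSubcategoryEquivalence (h : Q ≤ P) :
    FullSubcategory (fun X : P.FullSubcategory => Q X.obj) ≌ Q.FullSubcategory where
  functor := Q.lift (ι _ ⋙ P.ι) fun X => X.property
  inverse := lift _ (P.lift Q.ι fun X => h _ X.property) fun X => X.property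
  unitIso := Iso.refl _
  counitIso := Iso.refl _

end ObjectProperty

end CategoryTheory

theorem stmt_19_general {C : Type u} [Category.{v} C] (Z' Z'' : C → Prop)
    (hsub : ∀ X : C, Z'' X → Z' X)
    (h1 : IsRejective (C := ObjectProperty.FullSubcategory Z') (fun X => Z'' X.obj))
    (h2 : IsRejective Z') :
    IsRejective Z'' := by
  obtain ⟨⟨L₁, adjL₁, hL₁⟩, ⟨R₁, adjR₁, hR₁⟩⟩ := h1
  obtain ⟨⟨L₂, adjL₂, hL₂⟩, ⟨R₂, adjR₂, hR₂⟩⟩ := h2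
  -- Each inclusion is both a left and a right adjoint, so it preserves epis and monos.
  have := Functor.preservesEpimorphisms_of_adjunction adjR₁
  have := Functor.preservesMonomorphisms_of_adjunction adjL₁
  have := Functor.preservesEpimorphisms_of_adjunction adjR₂
  have := Functor.preservesMonomorphisms_of_adjunction adjL₂
  let e := ObjectProperty.fullSubcategoryOfFullSubcategoryEquivalence (P := Z') (Q := Z'') hsub
  -- `e.inverse ⋙ ι _ ⋙ ι Z'` is `ι Z''` up to definitional unfolding.
  refine ⟨⟨_, (adjL₂.comp adjL₁).comp e.toAdjunction, ?_⟩,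
    ⟨_, (e.symm.toAdjunction.comp adjR₁).comp adjR₂, ?_⟩⟩
  · exact (adjL₂.comp adjL₁).epi_comp_unit_app _ (adjL₂.epi_comp_unit_app _ hL₂ hL₁)
      fun _ => inferInstance
  · exact (e.symm.toAdjunction.comp adjR₁).mono_comp_counit_app _
      (e.symm.toAdjunction.mono_comp_counit_app _ (fun _ => inferInstance) hR₁) hR₂

/-- Transitivity of rejectivity: if `C'' ⊆ C' ⊆ C` are full subcategories (closed under
isomorphisms), `C''` is rejective in `C'`, and `C'` is rejective in `C`, then `C''` is
rejective in `C`. -/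
theorem stmt_19 {C : Type u} [Category.{v} C] (Z' Z'' : C → Prop)
    (hsub : ∀ X : C, Z'' X → Z' X)
    (hiso' : ∀ X Y : C, (X ≅ Y) → Z' X → Z' Y)
    (hiso'' : ∀ X Y : C, (X ≅ Y) → Z'' X → Z'' Y)
    (h1 : IsRejective (C := ObjectProperty.FullSubcategory Z') (fun X => Z'' X.obj))
    (h2 : IsRejective Z') :
    IsRejective Z'' :=
  stmt_19_general Z' Z'' hsub h1 h2
end
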